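/- arXiv:1804.01950 — 3 statements merged into one kernel-verified Lean document; each statement's English description precedes it below -/
import Mathlib

section
/- Let (G,H) be a CSS pair with n columns and adapted dual H*, and let 0 ≤ K₁ ≤ K₂ be real numbers. Then the homological difference at zero error is nonincreasing in K and Lipschitz with constant n: 0 ≤ ΔF_0(G,H;K₁) − ΔF_0(G,H;K₂) ≤ n·(K₂ − K₁). -/
open Matrix Filter

/-- Partition function `Z_e(G;K)` of the random-bond Ising model in Wegner's form. -/
noncomputable def Zf {ρ : Type*} [Fintype ρ] [DecidableEq ρ] {n : ℕ}
    (G : Matrix ρ (Fin n) (ZMod 2)) (e : Fin n → ZMod 2) (K : ℝ) : ℝ :=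
  ∑ α : ρ → ZMod 2,
    Real.exp (K * ∑ b : Fin n, (-1 : ℝ) ^ ((e b).val + ((Matrix.vecMul α G) b).val))

/-- `Hs` is an adapted dual of `H`: it stacks `G` on top of `k` extra rows, and its
row space equals `C_H^⊥ = {c | H cᵀ = 0}`. -/
def IsAdaptedDual {rG rH k n : ℕ} (G : Matrix (Fin rG) (Fin n) (ZMod 2))
    (H : Matrix (Fin rH) (Fin n) (ZMod 2))
    (Hs : Matrix (Fin rG ⊕ Fin k) (Fin n) (ZMod 2)) : Prop :=
  (∀ i, Hs (Sum.inl i) = G i) ∧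
  LinearMap.range Hs.vecMulLinear = LinearMap.ker H.mulVecLin

/-- Homological difference `ΔF_e(G,H;K) = ln Z_e(H*;K) − ln Z_e(G;K)`. -/
noncomputable def deltaF {ρ ρ' : Type*} [Fintype ρ] [DecidableEq ρ] [Fintype ρ'] [DecidableEq ρ'] {n : ℕ}
    (G : Matrix ρ (Fin n) (ZMod 2)) (Hs : Matrix ρ' (Fin n) (ZMod 2))
    (e : Fin n → ZMod 2) (K : ℝ) : ℝ :=
  Real.log (Zf Hs e K) - Real.log (Zf G e K)

/-- Disorder average `[X_e]_p = Σ_e p^{|e|}(1−p)^{n−|e|} X_e`. -/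
noncomputable def davg {n : ℕ} (p : ℝ) (X : (Fin n → ZMod 2) → ℝ) : ℝ :=
  ∑ e : Fin n → ZMod 2, p ^ hammingNorm e * (1 - p) ^ (n - hammingNorm e) * X e

/-- Average success probability of maximum-likelihood decoding. -/
noncomputable def Psucc {ρ ρ' : Type*} [Fintype ρ] [DecidableEq ρ] [Fintype ρ'] [DecidableEq ρ'] {n : ℕ}
    (G : Matrix ρ (Fin n) (ZMod 2)) (Hs : Matrix ρ' (Fin n) (ZMod 2))
    (K p : ℝ) : ℝ :=
  davg p (fun e => Zf G e K / Zf Hs e K)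

/-- CSS distance `d_G`: minimum Hamming weight of a vector `c` with `H cᵀ = 0`
that is not in the row space of `G`. -/
noncomputable def dCSS {rG rH n : ℕ} (G : Matrix (Fin rG) (Fin n) (ZMod 2))
    (H : Matrix (Fin rH) (Fin n) (ZMod 2)) : ℕ :=
  sInf {w | ∃ c : Fin n → ZMod 2,
    H.mulVec c = 0 ∧ (¬ ∃ α, Matrix.vecMul α G = c) ∧ hammingNorm c = w}

namespace S15aux

noncomputable def sgn (z : ZMod 2) : ℝ := (-1) ^ z.val

lemma zmod2_cases : ∀ z : ZMod 2, z = 0 ∨ z = 1 := by decide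

lemma sgn_zero : sgn 0 = 1 := by simp [sgn]

lemma sgn_one : sgn 1 = -1 := by
  have h : (1 : ZMod 2).val = 1 := rfl
  rw [sgn, h, pow_one]

lemma sgn_add (a b : ZMod 2) : sgn (a + b) = sgn a * sgn b := by
  rcases zmod2_cases a with ha | ha <;> rcases zmod2_cases b with hb | hb <;>
    subst ha <;> subst hb <;>
    simp only [add_zero, zero_add, sgn_zero, sgn_one, mul_one, one_mul, mul_neg, neg_neg] <;>
    first
      | rfl
      | (rw [show (1 : ZMod 2) + 1 = 0 from by decide, sgn_zero]; ring)

lemma sgn_eq_or (z : ZMod 2) : sgn z = 1 ∨ sgn z = -1 := by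
  rcases zmod2_cases z with h | h <;> subst h <;> simp [sgn_zero, sgn_one]

lemma sgn_le_one (z : ZMod 2) : sgn z ≤ 1 := by
  rcases sgn_eq_or z with h | h <;> rw [h] <;> norm_num

lemma neg_one_le_sgn (z : ZMod 2) : -1 ≤ sgn z := by
  rcases sgn_eq_or z with h | h <;> rw [h] <;> norm_num

lemma sgn_sum {ι : Type*} (s : Finset ι) (f : ι → ZMod 2) :
    sgn (∑ j ∈ s, f j) = ∏ j ∈ s, sgn (f j) := by
  classical
  induction s using Finset.cons_induction with
  | empty => simp [sgn_zero]
  | cons a s ha ih => rw [Finset.sum_cons, Finset.prod_cons, sgn_add, ih]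

lemma char_nonneg {ι : Type*} [Fintype ι] [DecidableEq ι] (c : ι → ZMod 2) :
    0 ≤ ∑ v : ι → ZMod 2, sgn (∑ j, v j * c j) := by
  have h1 : ∀ v : ι → ZMod 2, sgn (∑ j, v j * c j) = ∏ j, sgn (v j * c j) := fun v =>
    sgn_sum _ _
  simp_rw [h1]
  rw [← Fintype.piFinset_univ,
    ← Finset.prod_univ_sum (fun _ : ι => (Finset.univ : Finset (ZMod 2)))
      (fun j v => sgn (v * c j))]
  apply Finset.prod_nonneg
  intro j _
  have : (Finset.univ : Finset (ZMod 2)) = {0, 1} := by decide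
  rw [this, Finset.sum_pair (by decide)]
  simp only [zero_mul, sgn_zero, one_mul]
  have := neg_one_le_sgn (c j)
  linarith


variable {n : ℕ}

/-- the "energy" `E_M(α)` -/
noncomputable def En {ρ : Type*} [Fintype ρ] (M : Matrix ρ (Fin n) (ZMod 2))
    (α : ρ → ZMod 2) : ℝ :=
  ∑ b : Fin n, sgn (vecMul α M b)

lemma Zf_zero_eq {ρ : Type*} [Fintype ρ] [DecidableEq ρ] (M : Matrix ρ (Fin n) (ZMod 2))
    (K : ℝ) : Zf M 0 K = ∑ α : ρ → ZMod 2, Real.exp (K * En M α) := by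
  unfold Zf En sgn
  simp

lemma En_le {ρ : Type*} [Fintype ρ] (M : Matrix ρ (Fin n) (ZMod 2)) (α : ρ → ZMod 2) :
    En M α ≤ n := by
  calc En M α ≤ ∑ _b : Fin n, (1 : ℝ) := Finset.sum_le_sum fun b _ => sgn_le_one _
  _ = n := by simp

lemma neg_le_En {ρ : Type*} [Fintype ρ] (M : Matrix ρ (Fin n) (ZMod 2)) (α : ρ → ZMod 2) :
    -(n : ℝ) ≤ En M α := by
  calc (-(n:ℝ)) = ∑ _b : Fin n, (-1 : ℝ) := by simp
  _ ≤ En M α := Finset.sum_le_sum fun b _ => neg_one_le_sgn _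

lemma pow_sum_expand (g : Fin n → ℝ) (q : ℕ) :
    (∑ b : Fin n, g b) ^ q = ∑ t : Fin q → Fin n, ∏ i : Fin q, g (t i) := by
  rw [← Fintype.piFinset_univ,
    ← Finset.prod_univ_sum (fun _ : Fin q => (Finset.univ : Finset (Fin n)))
      (fun _ b => g b)]
  simp

lemma tuple_nonneg {ρ : Type*} [Fintype ρ] [DecidableEq ρ] (M : Matrix ρ (Fin n) (ZMod 2))
    {ι : Type*} [Fintype ι] (t : ι → Fin n) :
    0 ≤ ∑ α : ρ → ZMod 2, ∏ i : ι, sgn (vecMul α M (t i)) := by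
  have h : ∀ α : ρ → ZMod 2,
      ∏ i : ι, sgn (vecMul α M (t i)) = sgn (∑ j : ρ, α j * (∑ i : ι, M j (t i))) := by
    intro α
    rw [← sgn_sum]
    congr 1
    have : ∀ i : ι, vecMul α M (t i) = ∑ j : ρ, α j * M j (t i) := by
      intro i; rw [vecMul, dotProduct]
    simp_rw [this, Finset.mul_sum]
    rw [Finset.sum_comm]
  simp_rw [h]
  exact char_nonneg _

lemma moment_nonneg {ρ : Type*} [Fintype ρ] [DecidableEq ρ] (M : Matrix ρ (Fin n) (ZMod 2))
    (m : ℕ) : 0 ≤ ∑ α : ρ → ZMod 2, (En M α) ^ m := by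
  have h : ∀ α : ρ → ZMod 2, (En M α) ^ m = ∑ t : Fin m → Fin n, ∏ i, sgn (vecMul α M (t i)) :=
    fun α => pow_sum_expand _ m
  simp_rw [h]
  rw [Finset.sum_comm]
  exact Finset.sum_nonneg fun t _ => tuple_nonneg M t


lemma sgn_mul_mem (a b : ZMod 2) : -1 ≤ sgn a * sgn b ∧ sgn a * sgn b ≤ 1 := by
  rcases sgn_eq_or a with h | h <;> rcases sgn_eq_or b with h' | h' <;>
    rw [h, h'] <;> norm_num

lemma core_nonneg {rG k : ℕ} (G : Matrix (Fin rG) (Fin n) (ZMod 2))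
    (Hs : Matrix (Fin rG ⊕ Fin k) (Fin n) (ZMod 2)) (hG : ∀ i, Hs (Sum.inl i) = G i)
    (q m : ℕ) :
    0 ≤ ∑ α' : Fin rG → ZMod 2, ∑ β : (Fin rG ⊕ Fin k) → ZMod 2,
        (En G α' - En Hs β) ^ q * (En Hs β + En G α') ^ m := by
  classical
  set L : Matrix (Fin k) (Fin n) (ZMod 2) := Hs.submatrix Sum.inr id with hL
  -- splitting of vecMul over the sum type
  have hsplit : ∀ (a : Fin rG → ZMod 2) (g : Fin k → ZMod 2) (b : Fin n),
      vecMul (Sum.elim a g) Hs b = vecMul a G b + vecMul g L b := by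
    intro a g b
    simp only [vecMul, dotProduct]
    rw [Fintype.sum_sum_type]
    congr 1
    all_goals
      refine Finset.sum_congr rfl fun i _ => ?_
      simp [hG, hL]
  -- the weight function
  set w : ((Fin rG → ZMod 2) × (Fin k → ZMod 2)) → Fin n → ℝ :=
    fun p b => sgn (vecMul p.1 G b) * sgn (vecMul p.2 L b) with hw
  -- reindex the β-sum as a sum over pairs
  have hre : ∀ (f : ((Fin rG ⊕ Fin k) → ZMod 2) → ℝ),
      ∑ β, f β = ∑ p : (Fin rG → ZMod 2) × (Fin k → ZMod 2), f (Sum.elim p.1 p.2) := by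
    intro f
    exact (Equiv.sum_comp (Equiv.sumArrowEquivProdArrow (Fin rG) (Fin k) (ZMod 2)).symm f).symm
  -- shift the first component by α'
  have hshift : ∀ (α' : Fin rG → ZMod 2)
      (g : ((Fin rG → ZMod 2) × (Fin k → ZMod 2)) → ℝ),
      ∑ p : (Fin rG → ZMod 2) × (Fin k → ZMod 2), g p
        = ∑ p : (Fin rG → ZMod 2) × (Fin k → ZMod 2), g (α' + p.1, p.2) := by
    intro α' g
    exact (Equiv.sum_comp ((Equiv.addLeft α').prodCongr (Equiv.refl _)) g).symm
  -- energy of the stacked matrix at a shifted point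
  have hEnHs : ∀ (α' : Fin rG → ZMod 2) (p : (Fin rG → ZMod 2) × (Fin k → ZMod 2)),
      En Hs (Sum.elim (α' + p.1) p.2)
        = ∑ b : Fin n, sgn (vecMul α' G b) * w p b := by
    intro α' p
    unfold En
    refine Finset.sum_congr rfl fun b _ => ?_
    rw [hsplit, Matrix.add_vecMul]
    simp only [Pi.add_apply]
    rw [sgn_add, sgn_add, hw, mul_assoc]
  -- pointwise expansion into tuples
  have hpt : ∀ (α' : Fin rG → ZMod 2) (p : (Fin rG → ZMod 2) × (Fin k → ZMod 2)),
      (En G α' - En Hs (Sum.elim (α' + p.1) p.2)) ^ q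
          * (En Hs (Sum.elim (α' + p.1) p.2) + En G α') ^ m
        = ∑ t : (Fin q → Fin n) × (Fin m → Fin n),
            (∏ i : Fin q ⊕ Fin m, sgn (vecMul α' G (Sum.elim t.1 t.2 i)))
              * ((∏ i : Fin q, (1 - w p (t.1 i))) * ∏ j : Fin m, (1 + w p (t.2 j))) := by
    intro α' p
    have h1 : En G α' - En Hs (Sum.elim (α' + p.1) p.2)
        = ∑ b : Fin n, sgn (vecMul α' G b) * (1 - w p b) := by
      rw [hEnHs, En, ← Finset.sum_sub_distrib]
      exact Finset.sum_congr rfl fun b _ => by ring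
    have h2 : En Hs (Sum.elim (α' + p.1) p.2) + En G α'
        = ∑ b : Fin n, sgn (vecMul α' G b) * (1 + w p b) := by
      rw [hEnHs, En, ← Finset.sum_add_distrib]
      exact Finset.sum_congr rfl fun b _ => by ring
    rw [h1, h2, pow_sum_expand, pow_sum_expand, Finset.sum_mul_sum, Fintype.sum_prod_type]
    refine Finset.sum_congr rfl fun t₁ _ => Finset.sum_congr rfl fun t₂ _ => ?_
    rw [Finset.prod_mul_distrib, Finset.prod_mul_distrib, Fintype.prod_sum_type]
    simp only [Sum.elim_inl, Sum.elim_inr]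
    ring
  -- put everything together
  calc (0:ℝ)
      ≤ ∑ t : (Fin q → Fin n) × (Fin m → Fin n),
          (∑ α' : Fin rG → ZMod 2,
              ∏ i : Fin q ⊕ Fin m, sgn (vecMul α' G (Sum.elim t.1 t.2 i)))
            * (∑ p : (Fin rG → ZMod 2) × (Fin k → ZMod 2),
                (∏ i : Fin q, (1 - w p (t.1 i))) * ∏ j : Fin m, (1 + w p (t.2 j))) := by
        refine Finset.sum_nonneg fun t _ => mul_nonneg (tuple_nonneg G _) ?_
        refine Finset.sum_nonneg fun p _ => mul_nonneg ?_ ?_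
        · refine Finset.prod_nonneg fun i _ => ?_
          have h := (sgn_mul_mem (vecMul p.1 G (t.1 i)) (vecMul p.2 L (t.1 i))).2
          show (0:ℝ) ≤ 1 - sgn (vecMul p.1 G (t.1 i)) * sgn (vecMul p.2 L (t.1 i))
          linarith
        · refine Finset.prod_nonneg fun j _ => ?_
          have h := (sgn_mul_mem (vecMul p.1 G (t.2 j)) (vecMul p.2 L (t.2 j))).1
          show (0:ℝ) ≤ 1 + sgn (vecMul p.1 G (t.2 j)) * sgn (vecMul p.2 L (t.2 j))
          linarith
    _ = ∑ α' : Fin rG → ZMod 2, ∑ β : (Fin rG ⊕ Fin k) → ZMod 2,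
        (En G α' - En Hs β) ^ q * (En Hs β + En G α') ^ m := by
        simp_rw [Finset.sum_mul, Finset.mul_sum]
        rw [Finset.sum_comm]
        refine Finset.sum_congr rfl fun α' _ => ?_
        rw [hre, hshift α']
        rw [Finset.sum_comm]
        exact Finset.sum_congr rfl fun p _ => (hpt α' p).symm

/-! ### series lemmas -/

lemma exp_tsum (x : ℝ) : Real.exp x = ∑' m : ℕ, x ^ m / m.factorial := by
  rw [Real.exp_eq_exp_ℝ, NormedSpace.exp_eq_tsum_div]

lemma summable_norm_pow_fac (x : ℝ) :
    Summable (fun m : ℕ => ‖x ^ m / (m.factorial : ℝ)‖) := by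
  refine (Real.summable_pow_div_factorial |x|).congr fun m => ?_
  rw [Real.norm_eq_abs, abs_div, abs_pow, Nat.abs_cast]

lemma summable_norm_g (y : ℝ) :
    Summable (fun j : ℕ => ‖(y ^ j - (-y) ^ j) / (j.factorial : ℝ)‖) := by
  refine Summable.of_nonneg_of_le (fun j => norm_nonneg _) (fun j => ?_)
    ((summable_norm_pow_fac y).add (summable_norm_pow_fac (-y)))
  rw [sub_div]
  exact norm_sub_le _ _

lemma gt_sum (y : ℝ) : Real.exp y - Real.exp (-y)
    = ∑' j : ℕ, (y ^ j - (-y) ^ j) / (j.factorial : ℝ) := by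
  rw [exp_tsum y, exp_tsum (-y),
    ← Summable.tsum_sub (Real.summable_pow_div_factorial y) (Real.summable_pow_div_factorial (-y))]
  exact tsum_congr fun j => (sub_div _ _ _).symm

/-! ### the three claims -/

lemma Zf_pos {ρ : Type*} [Fintype ρ] [DecidableEq ρ] (M : Matrix ρ (Fin n) (ZMod 2))
    (K : ℝ) : 0 < Zf M 0 K := by
  rw [Zf_zero_eq]
  exact Finset.sum_pos (fun α _ => Real.exp_pos _) Finset.univ_nonempty

lemma claimB {ρ : Type*} [Fintype ρ] [DecidableEq ρ] (M : Matrix ρ (Fin n) (ZMod 2))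
    {K₁ K₂ : ℝ} (h0 : 0 ≤ K₁) (h12 : K₁ ≤ K₂) : Zf M 0 K₁ ≤ Zf M 0 K₂ := by
  rw [Zf_zero_eq, Zf_zero_eq, ← sub_nonneg, ← Finset.sum_sub_distrib]
  have key : ∀ a : ℝ, Real.exp (K₂ * a) - Real.exp (K₁ * a)
      = ∑' m : ℕ, (K₂ ^ m - K₁ ^ m) * a ^ m / (m.factorial : ℝ) := by
    intro a
    rw [exp_tsum, exp_tsum,
      ← Summable.tsum_sub (Real.summable_pow_div_factorial (K₂ * a))
        (Real.summable_pow_div_factorial (K₁ * a))]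
    refine tsum_congr fun m => ?_
    rw [mul_pow, mul_pow]
    ring
  simp_rw [key]
  rw [← Summable.tsum_finsetSum (fun α (_ : α ∈ Finset.univ) => Summable.congr
    (((Real.summable_pow_div_factorial (K₂ * En M α)).sub
      (Real.summable_pow_div_factorial (K₁ * En M α)))) fun m => by rw [mul_pow, mul_pow]; ring)]
  refine tsum_nonneg fun m => ?_
  have hc : ∀ α : ρ → ZMod 2, (K₂ ^ m - K₁ ^ m) * (En M α) ^ m / (m.factorial : ℝ)
      = ((K₂ ^ m - K₁ ^ m) / (m.factorial : ℝ)) * (En M α) ^ m := by intro α; ring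
  simp_rw [hc]
  rw [← Finset.mul_sum]
  have h1 : K₁ ^ m ≤ K₂ ^ m := pow_le_pow_left₀ h0 h12 m
  exact mul_nonneg (div_nonneg (by linarith) (Nat.cast_nonneg _)) (moment_nonneg M m)

lemma claimC {ρ : Type*} [Fintype ρ] [DecidableEq ρ] (M : Matrix ρ (Fin n) (ZMod 2))
    {K₁ K₂ : ℝ} (h12 : K₁ ≤ K₂) :
    Zf M 0 K₂ ≤ Real.exp ((n : ℝ) * (K₂ - K₁)) * Zf M 0 K₁ := by
  rw [Zf_zero_eq, Zf_zero_eq, Finset.mul_sum]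
  refine Finset.sum_le_sum fun α _ => ?_
  rw [← Real.exp_add]
  apply Real.exp_le_exp.2
  have h1 : En M α ≤ n := En_le M α
  nlinarith [sub_nonneg.2 h12]

set_option maxHeartbeats 2000000 in
lemma claimA {rG k : ℕ} (G : Matrix (Fin rG) (Fin n) (ZMod 2))
    (Hs : Matrix (Fin rG ⊕ Fin k) (Fin n) (ZMod 2)) (hG : ∀ i, Hs (Sum.inl i) = G i)
    {K₁ K₂ : ℝ} (h0 : 0 ≤ K₁) (h12 : K₁ ≤ K₂) :
    Zf Hs 0 K₂ * Zf G 0 K₁ ≤ Zf Hs 0 K₁ * Zf G 0 K₂ := by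
  classical
  set σ := (K₁ + K₂) / 2 with hσdef
  set h := (K₂ - K₁) / 2 with hhdef
  have hσ : 0 ≤ σ := by rw [hσdef]; linarith
  have hh : 0 ≤ h := by rw [hhdef]; linarith
  rw [Zf_zero_eq, Zf_zero_eq, Zf_zero_eq, Zf_zero_eq, Fintype.sum_mul_sum,
    Fintype.sum_mul_sum, ← sub_nonneg, ← Finset.sum_sub_distrib]
  simp_rw [← Finset.sum_sub_distrib]
  have key : ∀ a b : ℝ,
      Real.exp (K₁ * a) * Real.exp (K₂ * b) - Real.exp (K₂ * a) * Real.exp (K₁ * b)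
        = ∑' z : ℕ × ℕ, (σ * (a + b)) ^ z.1 / (z.1.factorial : ℝ)
            * (((h * (b - a)) ^ z.2 - (-(h * (b - a))) ^ z.2) / (z.2.factorial : ℝ)) := by
    intro a b
    have e1 : Real.exp (K₁ * a) * Real.exp (K₂ * b)
        = Real.exp (σ * (a + b)) * Real.exp (h * (b - a)) := by
      rw [← Real.exp_add, ← Real.exp_add]
      congr 1
      rw [hσdef, hhdef]; ring
    have e2 : Real.exp (K₂ * a) * Real.exp (K₁ * b)
        = Real.exp (σ * (a + b)) * Real.exp (-(h * (b - a))) := by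
      rw [← Real.exp_add, ← Real.exp_add]
      congr 1
      rw [hσdef, hhdef]; ring
    rw [e1, e2, ← mul_sub, gt_sum (h * (b - a)), exp_tsum (σ * (a + b))]
    exact tsum_mul_tsum_of_summable_norm (summable_norm_pow_fac _) (summable_norm_g _)
  have hsumm : ∀ a b : ℝ, Summable (fun z : ℕ × ℕ =>
      (σ * (a + b)) ^ z.1 / (z.1.factorial : ℝ)
        * (((h * (b - a)) ^ z.2 - (-(h * (b - a))) ^ z.2) / (z.2.factorial : ℝ))) :=
    fun a b => summable_mul_of_summable_norm (summable_norm_pow_fac _) (summable_norm_g _)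
  calc (0:ℝ)
      ≤ ∑' z : ℕ × ℕ, ∑ β : Fin rG ⊕ Fin k → ZMod 2, ∑ α' : Fin rG → ZMod 2,
          (σ * (En Hs β + En G α')) ^ z.1 / (z.1.factorial : ℝ)
            * (((h * (En G α' - En Hs β)) ^ z.2 - (-(h * (En G α' - En Hs β))) ^ z.2)
                / (z.2.factorial : ℝ)) := by
        refine tsum_nonneg fun z => ?_
        obtain ⟨m, j⟩ := z
        have hptc : ∀ (β : Fin rG ⊕ Fin k → ZMod 2) (α' : Fin rG → ZMod 2),
            (σ * (En Hs β + En G α')) ^ m / (m.factorial : ℝ)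
              * (((h * (En G α' - En Hs β)) ^ j - (-(h * (En G α' - En Hs β))) ^ j)
                  / (j.factorial : ℝ))
            = (σ ^ m / (m.factorial : ℝ) * ((h ^ j - (-h) ^ j) / (j.factorial : ℝ)))
                * ((En G α' - En Hs β) ^ j * (En Hs β + En G α') ^ m) := by
          intro β α'
          have hne : -(h * (En G α' - En Hs β)) = (-h) * (En G α' - En Hs β) := by ring
          rw [hne, mul_pow, mul_pow, mul_pow]
          ring
        simp_rw [hptc, ← Finset.mul_sum]
        have hgeo : (-h) ^ j ≤ h ^ j := by
          rcases Nat.even_or_odd j with he | ho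
          · rw [he.neg_pow]
          · rw [ho.neg_pow]
            nlinarith [pow_nonneg hh j]
        refine mul_nonneg (mul_nonneg (by positivity)
          (div_nonneg (by linarith) (Nat.cast_nonneg _))) ?_
        rw [Finset.sum_comm]
        exact core_nonneg G Hs hG j m
    _ = ∑ β : Fin rG ⊕ Fin k → ZMod 2, ∑' z : ℕ × ℕ, ∑ α' : Fin rG → ZMod 2,
          (σ * (En Hs β + En G α')) ^ z.1 / (z.1.factorial : ℝ)
            * (((h * (En G α' - En Hs β)) ^ z.2 - (-(h * (En G α' - En Hs β))) ^ z.2)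
                / (z.2.factorial : ℝ)) :=
        Summable.tsum_finsetSum fun β _ => summable_sum fun α' _ => hsumm (En Hs β) (En G α')
    _ = ∑ β : Fin rG ⊕ Fin k → ZMod 2, ∑ α' : Fin rG → ZMod 2, ∑' z : ℕ × ℕ,
          (σ * (En Hs β + En G α')) ^ z.1 / (z.1.factorial : ℝ)
            * (((h * (En G α' - En Hs β)) ^ z.2 - (-(h * (En G α' - En Hs β))) ^ z.2)
                / (z.2.factorial : ℝ)) :=
        Finset.sum_congr rfl fun β _ =>
          Summable.tsum_finsetSum fun α' _ => hsumm (En Hs β) (En G α')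
    _ = ∑ β : Fin rG ⊕ Fin k → ZMod 2, ∑ α' : Fin rG → ZMod 2,
          (Real.exp (K₁ * En Hs β) * Real.exp (K₂ * En G α')
            - Real.exp (K₂ * En Hs β) * Real.exp (K₁ * En G α')) :=
        Finset.sum_congr rfl fun β _ => Finset.sum_congr rfl fun α' _ =>
          (key (En Hs β) (En G α')).symm

end S15aux

/-- The homological difference at zero error is nonincreasing in `K` and Lipschitz with
constant `n`: for `0 ≤ K₁ ≤ K₂`, `0 ≤ ΔF_0(K₁) − ΔF_0(K₂) ≤ n(K₂ − K₁)`. -/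
theorem stmt15 {rG rH k n : ℕ} (G : Matrix (Fin rG) (Fin n) (ZMod 2))
    (H : Matrix (Fin rH) (Fin n) (ZMod 2)) (hGH : G * Hᵀ = 0)
    (hk : k = n - G.rank - H.rank)
    (Hs : Matrix (Fin rG ⊕ Fin k) (Fin n) (ZMod 2))
    (hHs : IsAdaptedDual G H Hs)
    (K₁ K₂ : ℝ) (hK₁ : 0 ≤ K₁) (hK₁₂ : K₁ ≤ K₂) :
    0 ≤ deltaF G Hs 0 K₁ - deltaF G Hs 0 K₂ ∧
      deltaF G Hs 0 K₁ - deltaF G Hs 0 K₂ ≤ (n : ℝ) * (K₂ - K₁) := by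
  classical
  obtain ⟨hstack, -⟩ := hHs
  have p1 : 0 < Zf Hs 0 K₁ := S15aux.Zf_pos Hs K₁
  have p2 : 0 < Zf Hs 0 K₂ := S15aux.Zf_pos Hs K₂
  have p3 : 0 < Zf G 0 K₁ := S15aux.Zf_pos G K₁
  have p4 : 0 < Zf G 0 K₂ := S15aux.Zf_pos G K₂
  have hA : Zf Hs 0 K₂ * Zf G 0 K₁ ≤ Zf Hs 0 K₁ * Zf G 0 K₂ :=
    S15aux.claimA G Hs hstack hK₁ hK₁₂
  have hB : Zf Hs 0 K₁ ≤ Zf Hs 0 K₂ := S15aux.claimB Hs hK₁ hK₁₂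
  have hC : Zf G 0 K₂ ≤ Real.exp ((n : ℝ) * (K₂ - K₁)) * Zf G 0 K₁ :=
    S15aux.claimC G hK₁₂
  have hexp : (0:ℝ) < Real.exp ((n : ℝ) * (K₂ - K₁)) := Real.exp_pos _
  unfold deltaF
  constructor
  · have l1 : Real.log (Zf Hs 0 K₂ * Zf G 0 K₁) ≤ Real.log (Zf Hs 0 K₁ * Zf G 0 K₂) :=
      Real.log_le_log (mul_pos p2 p3) hA
    rw [Real.log_mul p2.ne' p3.ne', Real.log_mul p1.ne' p4.ne'] at l1
    linarith
  · have l2 : Real.log (Zf Hs 0 K₁ * Zf G 0 K₂)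
        ≤ Real.log (Zf Hs 0 K₂ * (Real.exp ((n : ℝ) * (K₂ - K₁)) * Zf G 0 K₁)) :=
      Real.log_le_log (mul_pos p1 p4) (mul_le_mul hB hC p4.le p2.le)
    rw [Real.log_mul p1.ne' p4.ne', Real.log_mul p2.ne' (mul_pos hexp p3).ne',
      Real.log_mul hexp.ne' p3.ne', Real.log_exp] at l2
    linarith
end

section
/- (Theorem 2, homological form.) Let (G_t,H_t), t ∈ ℕ, be a sequence of CSS pairs with block lengths n_t → ∞ and k_t = n_t − rank(G_t) − rank(H_t), and suppose the rates k_t/n_t converge to some R > 0. Let K₁, K₂ > 0 be such that lim_{t→∞} ΔF_0(G_t,H_t;K₁)/n_t = 0 and lim_{t→∞} ΔF_0(H_t,G_t;K₂)/n_t = 0. Then K₁ − K₂* ≥ R·ln 2, where K₂* > 0 is defined by tanh(K₂*) = e^{−2K₂}. -/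
open Matrix Filter

noncomputable def chi (z : ZMod 2) : ℝ := if z = 0 then 1 else -1

lemma zmod2_cases : ∀ v : ZMod 2, v = 0 ∨ v = 1 := by decide

lemma chi_zero : chi 0 = 1 := by simp [chi]

lemma chi_one : chi 1 = -1 := by simp [chi]

lemma chi_add (u v : ZMod 2) : chi (u + v) = chi u * chi v := by
  rcases zmod2_cases u with h | h <;> rcases zmod2_cases v with h' | h' <;>
    simp [h, h', chi, show (1 + 1 : ZMod 2) = 0 by decide]

lemma chi_sum {ι : Type*} (s : Finset ι) (v : ι → ZMod 2) :
    chi (∑ j ∈ s, v j) = ∏ j ∈ s, chi (v j) := by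
  induction s using Finset.cons_induction with
  | empty => simp [chi]
  | cons a s ha ih => rw [Finset.sum_cons, Finset.prod_cons, chi_add, ih]

lemma one_add_chi_nonneg (z : ZMod 2) : 0 ≤ 1 + chi z := by
  rcases zmod2_cases z with h | h <;> simp [h, chi]

lemma sum_zmod2 {M : Type*} [AddCommMonoid M] (f : ZMod 2 → M) :
    ∑ z : ZMod 2, f z = f 0 + f 1 := by
  rw [show (Finset.univ : Finset (ZMod 2)) = {0, 1} by decide]
  rw [Finset.sum_insert (by decide), Finset.sum_singleton]

variable {n : ℕ} {ρ : Type*} [Fintype ρ] [DecidableEq ρ]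

/-- weighted sum over the row space (with multiplicity). -/
noncomputable def Yf (M : Matrix ρ (Fin n) (ZMod 2)) (x : ℝ) : ℝ :=
  ∑ α : ρ → ZMod 2, ∏ j : Fin n, x ^ ((α ᵥ* M) j).val

noncomputable def pickf (a b : Fin n → ℝ) (c : Fin n → ZMod 2) : ℝ :=
  ∏ j, (if c j = 0 then a j else b j)

lemma sum_chi (d : ρ → ZMod 2) :
    ∑ α : ρ → ZMod 2, chi (α ⬝ᵥ d) = ∏ i, (1 + chi (d i)) := by
  have h1 : ∀ α : ρ → ZMod 2, chi (α ⬝ᵥ d) = ∏ i, chi (α i * d i) := by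
    intro α; rw [dotProduct, chi_sum]
  simp_rw [h1]
  have := (Finset.prod_univ_sum (fun _ : ρ => (Finset.univ : Finset (ZMod 2)))
    (fun i z => chi (z * d i)))
  rw [Fintype.piFinset_univ] at this
  rw [← this]
  apply Finset.prod_congr rfl
  intro i _
  rw [sum_zmod2]
  simp [chi_zero]

lemma lemE (M : Matrix ρ (Fin n) (ZMod 2)) (a b : Fin n → ℝ) :
    ∑ α : ρ → ZMod 2, ∏ j, (a j + b j * chi ((α ᵥ* M) j))
      = ∑ c : Fin n → ZMod 2, pickf a b c * ∏ i, (1 + chi ((M *ᵥ c) i)) := by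
  have step1 : ∀ u : Fin n → ZMod 2,
      ∏ j, (a j + b j * chi (u j))
        = ∑ c : Fin n → ZMod 2, pickf a b c * chi (u ⬝ᵥ c) := by
    intro u
    have h1 : ∀ j : Fin n, a j + b j * chi (u j)
        = ∑ z : ZMod 2, (if z = 0 then a j else b j * chi (u j)) := by
      intro j; rw [sum_zmod2]; simp
    calc ∏ j, (a j + b j * chi (u j))
        = ∏ j, ∑ z : ZMod 2, (if z = 0 then a j else b j * chi (u j)) := by
          exact Finset.prod_congr rfl fun j _ => h1 j
      _ = ∑ c ∈ Fintype.piFinset (fun _ : Fin n => (Finset.univ : Finset (ZMod 2))),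
            ∏ j, (if c j = 0 then a j else b j * chi (u j)) :=
          Finset.prod_univ_sum _ _
      _ = ∑ c : Fin n → ZMod 2, pickf a b c * chi (u ⬝ᵥ c) := by
          rw [Fintype.piFinset_univ]
          apply Finset.sum_congr rfl
          intro c _
          have h2 : ∀ j : Fin n, (if c j = 0 then a j else b j * chi (u j))
              = (if c j = 0 then a j else b j) * chi (u j * c j) := by
            intro j
            rcases zmod2_cases (c j) with h | h <;> simp [h, chi_zero]
          rw [Finset.prod_congr rfl (fun j _ => h2 j), Finset.prod_mul_distrib]
          rw [pickf, dotProduct, chi_sum]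
  calc ∑ α : ρ → ZMod 2, ∏ j, (a j + b j * chi ((α ᵥ* M) j))
      = ∑ α : ρ → ZMod 2, ∑ c : Fin n → ZMod 2, pickf a b c * chi (α ⬝ᵥ (M *ᵥ c)) := by
        apply Finset.sum_congr rfl; intro α _
        rw [step1]
        apply Finset.sum_congr rfl; intro c _
        rw [Matrix.dotProduct_mulVec]
    _ = ∑ c : Fin n → ZMod 2, pickf a b c * ∑ α : ρ → ZMod 2, chi (α ⬝ᵥ (M *ᵥ c)) := by
        rw [Finset.sum_comm]
        exact Finset.sum_congr rfl fun c _ => (Finset.mul_sum _ _ _).symm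
    _ = _ := by
        exact Finset.sum_congr rfl fun c _ => by rw [sum_chi]

set_option linter.unusedSectionVars false

lemma prod_one_add_chi (d : ρ → ZMod 2) :
    ∏ i, (1 + chi (d i)) = if d = 0 then (2 : ℝ) ^ (Fintype.card ρ) else 0 := by
  by_cases h : d = 0
  · subst h; simp [chi_zero]; norm_num
  · simp only [h, if_false]
    obtain ⟨i, hi⟩ : ∃ i, d i ≠ 0 := by
      by_contra hc; push_neg at hc; exact h (funext hc)
    apply Finset.prod_eq_zero (Finset.mem_univ i)
    rcases zmod2_cases (d i) with h' | h'
    · exact absurd h' hi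
    · rw [h', chi_one]; ring

/-- Master comparison principle. -/
lemma cmpY (M : Matrix ρ (Fin n) (ZMod 2)) (a b a' b' : Fin n → ℝ)
    (ha : ∀ j, |a' j| ≤ a j) (hb : ∀ j, |b' j| ≤ b j) :
    ∑ α : ρ → ZMod 2, ∏ j, (a' j + b' j * chi ((α ᵥ* M) j))
      ≤ ∑ α : ρ → ZMod 2, ∏ j, (a j + b j * chi ((α ᵥ* M) j)) := by
  rw [lemE, lemE]
  apply Finset.sum_le_sum
  intro c _
  have hnn : 0 ≤ ∏ i, (1 + chi ((M *ᵥ c) i)) :=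
    Finset.prod_nonneg fun i _ => one_add_chi_nonneg _
  apply mul_le_mul_of_nonneg_right _ hnn
  calc pickf a' b' c ≤ |pickf a' b' c| := le_abs_self _
    _ = ∏ j, |if c j = 0 then a' j else b' j| := by rw [pickf, Finset.abs_prod]
    _ ≤ pickf a b c := by
        rw [pickf]
        apply Finset.prod_le_prod (fun j _ => abs_nonneg _)
        intro j _
        by_cases h : c j = 0 <;> simp [h, ha j, hb j]

lemma pow_val_repr (x : ℝ) (v : ZMod 2) :
    x ^ v.val = (1 + x) / 2 + (1 - x) / 2 * chi v := by
  rcases zmod2_cases v with h | h <;> simp [h, chi_zero, chi_one] <;> ring_nf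
  · norm_num [ZMod.val_one]

/-- kernel weight enumerator (as an `ite` sum). -/
noncomputable def Wk (N : Matrix ρ (Fin n) (ZMod 2)) (u : ℝ) : ℝ :=
  ∑ c : Fin n → ZMod 2, if N *ᵥ c = 0 then ∏ j, u ^ ((c j).val) else 0

/-- MacWilliams identity. -/
lemma idA (M : Matrix ρ (Fin n) (ZMod 2)) (x : ℝ) (hx : 1 + x ≠ 0) :
    Yf M x = 2 ^ (Fintype.card ρ) * ((1 + x) / 2) ^ n * Wk M ((1 - x) / (1 + x)) := by
  have h1 : Yf M x = ∑ α : ρ → ZMod 2,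
      ∏ j, ((1 + x) / 2 + (1 - x) / 2 * chi ((α ᵥ* M) j)) := by
    rw [Yf]
    exact Finset.sum_congr rfl fun α _ => Finset.prod_congr rfl fun j _ => pow_val_repr x _
  rw [h1, lemE, Wk, Finset.mul_sum]
  apply Finset.sum_congr rfl
  intro c _
  rw [prod_one_add_chi]
  by_cases h : M *ᵥ c = 0
  · simp only [h, if_true]
    have hpick : pickf (fun _ => (1 + x) / 2) (fun _ => (1 - x) / 2) c
        = ((1 + x) / 2) ^ n * ∏ j, ((1 - x) / (1 + x)) ^ ((c j).val) := by
      rw [pickf, show (((1+x)/2 : ℝ)) ^ n = ∏ _j : Fin n, ((1+x)/2 : ℝ) by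
            rw [Finset.prod_const, Finset.card_univ, Fintype.card_fin],
          ← Finset.prod_mul_distrib]
      apply Finset.prod_congr rfl
      intro j _
      rcases zmod2_cases (c j) with h' | h'
      · simp [h']
      · simp only [h', if_neg (by decide : (1 : ZMod 2) ≠ 0)]
        rw [show ((1 : ZMod 2)).val = 1 from rfl, pow_one]
        field_simp
    rw [hpick]; ring
  · simp [h]

/-- number of `α` with `α ᵥ* N = 0`. -/
noncomputable def Kc (N : Matrix ρ (Fin n) (ZMod 2)) : ℕ :=
  (Finset.univ.filter (fun α : ρ → ZMod 2 => α ᵥ* N = 0)).card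

lemma Kc_pos (N : Matrix ρ (Fin n) (ZMod 2)) : 0 < Kc N := by
  apply Finset.card_pos.mpr
  exact ⟨0, Finset.mem_filter.mpr ⟨Finset.mem_univ _, by simp [Matrix.vecMul_zero]⟩⟩

lemma sum_comp_vecMul (N : Matrix ρ (Fin n) (ZMod 2)) (F : (Fin n → ZMod 2) → ℝ) :
    ∑ α : ρ → ZMod 2, F (α ᵥ* N)
      = (Kc N : ℝ) * ∑ c ∈ Finset.univ.image (fun α : ρ → ZMod 2 => α ᵥ* N), F c := by
  rw [Finset.sum_comp F (fun α : ρ → ZMod 2 => α ᵥ* N), Finset.mul_sum]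
  apply Finset.sum_congr rfl
  intro c hc
  obtain ⟨α₀, -, rfl⟩ := Finset.mem_image.mp hc
  rw [nsmul_eq_mul]
  congr 2
  apply Finset.card_bij' (i := fun α _ => α - α₀) (j := fun α _ => α + α₀)
  · intro a ha
    rw [Finset.mem_filter] at ha ⊢
    refine ⟨Finset.mem_univ _, ?_⟩
    rw [Matrix.sub_vecMul, ha.2, sub_self]
  · intro a ha
    rw [Finset.mem_filter] at ha ⊢
    refine ⟨Finset.mem_univ _, ?_⟩
    rw [Matrix.add_vecMul, ha.2, zero_add]
  · intro a _; simp
  · intro a _; simp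

lemma vecMulLinear_eq_mulVecLin_transpose (N : Matrix ρ (Fin n) (ZMod 2)) :
    N.vecMulLinear = Nᵀ.mulVecLin := by
  apply LinearMap.ext
  intro v
  rw [Matrix.vecMulLinear_apply, Matrix.mulVecLin_apply, Matrix.mulVec_transpose]

lemma Kc_eq_pow (N : Matrix ρ (Fin n) (ZMod 2)) :
    Kc N = 2 ^ (Module.finrank (ZMod 2) (LinearMap.ker N.vecMulLinear)) := by
  classical
  rw [Kc, ← Fintype.card_subtype]
  have e : {α : ρ → ZMod 2 // α ᵥ* N = 0} ≃ LinearMap.ker N.vecMulLinear :=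
    Equiv.subtypeEquivRight (by
      intro α
      rw [LinearMap.mem_ker, Matrix.vecMulLinear_apply])
  rw [Fintype.card_congr e]
  have := @Module.card_eq_pow_finrank (ZMod 2) (LinearMap.ker N.vecMulLinear) _ _ _ _ (Fintype.ofFinite _)
  rw [Fintype.card_eq_nat_card, Nat.card_eq_fintype_card] at *
  rw [this, ZMod.card]

lemma Yf_pos (M : Matrix ρ (Fin n) (ZMod 2)) {x : ℝ} (hx : 0 < x) : 0 < Yf M x := by
  rw [Yf]
  apply Finset.sum_pos
  · intro α _
    exact Finset.prod_pos fun j _ => pow_pos hx _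
  · exact Finset.univ_nonempty

lemma Wk_pos (N : Matrix ρ (Fin n) (ZMod 2)) {u : ℝ} (hu : 0 < u) : 0 < Wk N u := by
  rw [Wk]
  apply Finset.sum_pos'
  · intro c _
    split
    · exact le_of_lt (Finset.prod_pos fun j _ => pow_pos hu _)
    · exact le_refl 0
  · refine ⟨0, Finset.mem_univ _, ?_⟩
    rw [if_pos (Matrix.mulVec_zero N)]
    apply Finset.prod_pos fun j _ => pow_pos hu _

lemma finrank_ker_vecMul (N : Matrix ρ (Fin n) (ZMod 2)) :
    Module.finrank (ZMod 2) (LinearMap.ker N.vecMulLinear)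
      + Module.finrank (ZMod 2) (LinearMap.range N.vecMulLinear) = Fintype.card ρ := by
  rw [add_comm, LinearMap.finrank_range_add_finrank_ker, Module.finrank_pi]

lemma finrank_range_vecMul (N : Matrix ρ (Fin n) (ZMod 2)) :
    Module.finrank (ZMod 2) (LinearMap.range N.vecMulLinear) = N.rank := by
  rw [vecMulLinear_eq_mulVecLin_transpose]
  exact Matrix.rank_transpose N

lemma rank_nullity_mulVec (N : Matrix ρ (Fin n) (ZMod 2)) :
    N.rank + Module.finrank (ZMod 2) (LinearMap.ker N.mulVecLin) = n := by
  have := LinearMap.finrank_range_add_finrank_ker N.mulVecLin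
  rw [Module.finrank_pi, Fintype.card_fin] at this
  exact this


section CSS

variable {rG rH kk : ℕ}
  (G : Matrix (Fin rG) (Fin n) (ZMod 2)) (H : Matrix (Fin rH) (Fin n) (ZMod 2))
  (Hs : Matrix (Fin rG ⊕ Fin kk) (Fin n) (ZMod 2))
  (Gs : Matrix (Fin rH ⊕ Fin kk) (Fin n) (ZMod 2))

lemma rank_add_rank_le (hGH : G * Hᵀ = 0) : G.rank + H.rank ≤ n := by
  have hle : LinearMap.range H.vecMulLinear ≤ LinearMap.ker G.mulVecLin := by
    rintro c ⟨β, rfl⟩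
    rw [LinearMap.mem_ker, Matrix.mulVecLin_apply, Matrix.vecMulLinear_apply,
      ← Matrix.mulVec_transpose, Matrix.mulVec_mulVec, hGH, Matrix.zero_mulVec]
  have h1 : H.rank ≤ Module.finrank (ZMod 2) (LinearMap.ker G.mulVecLin) := by
    rw [← finrank_range_vecMul]
    exact Submodule.finrank_mono hle
  have h2 := rank_nullity_mulVec G
  omega

lemma row_mem_range (N : Matrix ρ (Fin n) (ZMod 2)) (i : ρ) :
    N i ∈ LinearMap.range N.vecMulLinear := by
  refine ⟨Pi.single i 1, ?_⟩
  rw [Matrix.vecMulLinear_apply]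
  funext j
  rw [Matrix.vecMul, dotProduct]
  rw [Finset.sum_eq_single i]
  · simp
  · intro b _ hb; simp [Pi.single_apply, hb]
  · intro h; exact absurd (Finset.mem_univ i) h

lemma ker_Gs_eq (hGs : IsAdaptedDual H G Gs) :
    LinearMap.ker Gs.mulVecLin = LinearMap.range G.vecMulLinear := by
  have hle : LinearMap.range G.vecMulLinear ≤ LinearMap.ker Gs.mulVecLin := by
    rintro c ⟨β, rfl⟩
    rw [LinearMap.mem_ker, Matrix.mulVecLin_apply, Matrix.vecMulLinear_apply]
    funext i
    have hrow : Gs i ∈ LinearMap.range Gs.vecMulLinear := row_mem_range Gs i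
    rw [hGs.2, LinearMap.mem_ker, Matrix.mulVecLin_apply] at hrow
    calc (Gs *ᵥ (β ᵥ* G)) i = Gs i ⬝ᵥ (β ᵥ* G) := rfl
      _ = (β ᵥ* G) ⬝ᵥ Gs i := dotProduct_comm _ _
      _ = β ⬝ᵥ (G *ᵥ Gs i) := (Matrix.dotProduct_mulVec β G (Gs i)).symm
      _ = β ⬝ᵥ (0 : Fin rG → ZMod 2) := by rw [hrow]
      _ = 0 := dotProduct_zero β
  refine (Submodule.eq_of_le_of_finrank_eq hle ?_).symm
  have e1 := finrank_range_vecMul G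
  have e2 := rank_nullity_mulVec Gs
  have e3 : Gs.rank = Module.finrank (ZMod 2) (LinearMap.ker G.mulVecLin) := by
    rw [← finrank_range_vecMul, hGs.2]
  have e4 := rank_nullity_mulVec G
  omega

lemma Kc_pair_eq (hGH : G * Hᵀ = 0) (hk : kk = n - G.rank - H.rank)
    (hHs : IsAdaptedDual G H Hs) : Kc Hs = Kc G := by
  rw [Kc_eq_pow, Kc_eq_pow]
  congr 1
  have h1 := finrank_ker_vecMul Hs
  rw [Fintype.card_sum, Fintype.card_fin, Fintype.card_fin] at h1
  have h2 : Module.finrank (ZMod 2) (LinearMap.range Hs.vecMulLinear)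
      = Module.finrank (ZMod 2) (LinearMap.ker H.mulVecLin) := by rw [hHs.2]
  have h3 := rank_nullity_mulVec H
  have h4 := finrank_ker_vecMul G
  rw [Fintype.card_fin] at h4
  have h5 := finrank_range_vecMul G
  have h6 := rank_add_rank_le G H hGH
  omega

lemma Yf_dualize {ρ' : Type*} [Fintype ρ'] [DecidableEq ρ']
    (N : Matrix ρ (Fin n) (ZMod 2)) (P : Matrix ρ' (Fin n) (ZMod 2))
    (hNP : LinearMap.ker P.mulVecLin = LinearMap.range N.vecMulLinear) (u : ℝ) :
    Yf N u = (Kc N : ℝ) * Wk P u := by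
  have h := sum_comp_vecMul N (fun c : Fin n → ZMod 2 => ∏ j, u ^ ((c j).val))
  beta_reduce at h
  rw [Yf, h]
  congr 1
  have himg : Finset.univ.image (fun α : ρ → ZMod 2 => α ᵥ* N)
      = Finset.univ.filter (fun c : Fin n → ZMod 2 => P *ᵥ c = 0) := by
    apply Finset.ext
    intro c
    rw [Finset.mem_image, Finset.mem_filter]
    constructor
    · rintro ⟨α, -, rfl⟩
      refine ⟨Finset.mem_univ _, ?_⟩
      have : α ᵥ* N ∈ LinearMap.range N.vecMulLinear := ⟨α, by rw [Matrix.vecMulLinear_apply]⟩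
      rw [← hNP, LinearMap.mem_ker, Matrix.mulVecLin_apply] at this
      exact this
    · rintro ⟨-, hc⟩
      have : c ∈ LinearMap.ker P.mulVecLin := by
        rw [LinearMap.mem_ker, Matrix.mulVecLin_apply]; exact hc
      rw [hNP] at this
      obtain ⟨α, hα⟩ := this
      exact ⟨α, Finset.mem_univ _, by rw [← Matrix.vecMulLinear_apply]; exact hα⟩
  rw [himg, Wk, Finset.sum_filter]


lemma keyIdentity (hGH : G * Hᵀ = 0) (hk : kk = n - G.rank - H.rank)
    (hHs : IsAdaptedDual G H Hs) (hGs : IsAdaptedDual H G Gs)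
    {x : ℝ} (hx0 : 0 < x) (hx1 : x < 1) :
    Real.log (Yf Gs x) - Real.log (Yf H x)
      = kk * Real.log 2
        - (Real.log (Yf Hs ((1 - x) / (1 + x))) - Real.log (Yf G ((1 - x) / (1 + x)))) := by
  set u := (1 - x) / (1 + x) with hu
  have hx2 : (0 : ℝ) < 1 + x := by linarith
  have hu0 : 0 < u := div_pos (by linarith) hx2
  have hWkGs := Wk_pos Gs hu0
  have hWkH := Wk_pos H hu0
  have hKcG := Kc_pos G
  have hKcHs := Kc_pos Hs
  have cardGs : Fintype.card (Fin rH ⊕ Fin kk) = rH + kk := by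
    rw [Fintype.card_sum, Fintype.card_fin, Fintype.card_fin]
  have cardH : Fintype.card (Fin rH) = rH := Fintype.card_fin _
  have A1 : Real.log (Yf Gs x)
      = (rH + kk : ℕ) * Real.log 2 + n * Real.log ((1 + x) / 2) + Real.log (Wk Gs u) := by
    rw [idA Gs x (ne_of_gt hx2), cardGs, ← hu]
    rw [Real.log_mul (by positivity) (ne_of_gt hWkGs),
        Real.log_mul (by positivity) (by positivity),
        Real.log_pow, Real.log_pow]
  have A2 : Real.log (Yf H x)
      = (rH : ℕ) * Real.log 2 + n * Real.log ((1 + x) / 2) + Real.log (Wk H u) := by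
    rw [idA H x (ne_of_gt hx2), cardH, ← hu]
    rw [Real.log_mul (by positivity) (ne_of_gt hWkH),
        Real.log_mul (by positivity) (by positivity),
        Real.log_pow, Real.log_pow]
  have A3 : Real.log (Yf G u) = Real.log (Kc G) + Real.log (Wk Gs u) := by
    rw [Yf_dualize G Gs (ker_Gs_eq G H Gs hGs) u,
        Real.log_mul (by positivity) (ne_of_gt hWkGs)]
  have A4 : Real.log (Yf Hs u) = Real.log (Kc Hs) + Real.log (Wk H u) := by
    rw [Yf_dualize Hs H hHs.2.symm u,
        Real.log_mul (by positivity) (ne_of_gt hWkH)]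
  have A5 : (Kc Hs : ℝ) = Kc G := by
    rw [Kc_pair_eq G H Hs hGH hk hHs]
  rw [A1, A2, A3, A4, A5]
  push_cast
  ring

end CSS

lemma mul_pow_val_repr (s t : ℝ) (v : ZMod 2) :
    s * t ^ v.val = s * (1 + t) / 2 + s * (1 - t) / 2 * chi v := by
  rcases zmod2_cases v with h | h <;>
    simp [h, chi_zero, chi_one, ZMod.val_one] <;> ring

lemma Yf_mono (M : Matrix ρ (Fin n) (ZMod 2)) {x y : ℝ} (hy : 0 ≤ y) (hxy : y ≤ x) :
    Yf M y ≤ Yf M x := by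
  apply Finset.sum_le_sum
  intro α _
  apply Finset.prod_le_prod (fun j _ => pow_nonneg hy _)
  intro j _
  exact pow_le_pow_left₀ hy hxy _

lemma Yf_lip (M : Matrix ρ (Fin n) (ZMod 2)) {x y : ℝ} (hy : 0 < y) (hxy : y ≤ x)
    (hx1 : x ≤ 1) :
    Real.sqrt y ^ n * Yf M x ≤ Real.sqrt x ^ n * Yf M y := by
  have hx : (0:ℝ) < x := lt_of_lt_of_le hy hxy
  have hsx : Real.sqrt x ^ 2 = x := Real.sq_sqrt hx.le
  have hsy : Real.sqrt y ^ 2 = y := Real.sq_sqrt hy.le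
  have hsxy : Real.sqrt y ≤ Real.sqrt x := Real.sqrt_le_sqrt hxy
  have hsy0 : 0 ≤ Real.sqrt y := Real.sqrt_nonneg y
  have hsx1 : Real.sqrt x ≤ 1 := Real.sqrt_le_one.mpr hx1
  have hy1 : y ≤ 1 := le_trans hxy hx1
  have hrw : ∀ (s t : ℝ) (α : ρ → ZMod 2),
      s ^ n * ∏ j : Fin n, t ^ ((α ᵥ* M) j).val
        = ∏ j : Fin n, (s * (1 + t) / 2 + s * (1 - t) / 2 * chi ((α ᵥ* M) j)) := by
    intro s t α
    rw [show s ^ n = ∏ _j : Fin n, s by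
          rw [Finset.prod_const, Finset.card_univ, Fintype.card_fin],
        ← Finset.prod_mul_distrib]
    exact Finset.prod_congr rfl fun j _ => mul_pow_val_repr s t _
  rw [Yf, Yf, Finset.mul_sum, Finset.mul_sum]
  rw [Finset.sum_congr rfl fun α _ => hrw (Real.sqrt y) x α,
      Finset.sum_congr rfl fun α _ => hrw (Real.sqrt x) y α]
  apply cmpY M (fun _ => Real.sqrt x * (1 + y) / 2) (fun _ => Real.sqrt x * (1 - y) / 2)
  · intro j
    have h0 : (0:ℝ) ≤ Real.sqrt y * (1 + x) / 2 := by nlinarith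
    rw [abs_of_nonneg h0]
    nlinarith [mul_nonneg (sub_nonneg.mpr hsxy) (sub_nonneg.mpr
      (show Real.sqrt x * Real.sqrt y ≤ 1 by nlinarith))]
  · intro j
    have h0 : (0:ℝ) ≤ Real.sqrt y * (1 - x) / 2 := by nlinarith
    rw [abs_of_nonneg h0]
    nlinarith [mul_nonneg (sub_nonneg.mpr hsxy)
      (show (0:ℝ) ≤ 1 + Real.sqrt x * Real.sqrt y by positivity)]

section Pair

variable {rG kk' : ℕ}
  (G : Matrix (Fin rG) (Fin n) (ZMod 2))
  (Hs : Matrix (Fin rG ⊕ Fin kk') (Fin n) (ZMod 2))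

lemma vecMul_inl (h1 : ∀ i, Hs (Sum.inl i) = G i) (β : Fin rG → ZMod 2) :
    (Sum.elim β 0) ᵥ* Hs = β ᵥ* G := by
  funext j
  simp [Matrix.vecMul, dotProduct, Fintype.sum_sum_type, h1]

lemma Yf_sub (h1 : ∀ i, Hs (Sum.inl i) = G i) {x : ℝ} (hx : 0 ≤ x) :
    Yf G x ≤ Yf Hs x := by
  let e := (Equiv.sumArrowEquivProdArrow (Fin rG) (Fin kk') (ZMod 2)).symm
  have hsum : Yf Hs x = ∑ p : (Fin rG → ZMod 2) × (Fin kk' → ZMod 2),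
      ∏ j : Fin n, x ^ (((e p) ᵥ* Hs) j).val := by
    rw [Yf, ← Equiv.sum_comp e (fun α : (Fin rG ⊕ Fin kk') → ZMod 2 =>
      ∏ j : Fin n, x ^ ((α ᵥ* Hs) j).val)]
  rw [hsum, Fintype.sum_prod_type]
  apply Finset.sum_le_sum
  intro β _
  have heq : e (β, 0) = Sum.elim β 0 := by
    funext s
    rcases s with i | i <;> simp [e, Equiv.sumArrowEquivProdArrow]
  calc ∏ j : Fin n, x ^ ((β ᵥ* G) j).val
      = ∏ j : Fin n, x ^ (((e (β, (0 : Fin kk' → ZMod 2))) ᵥ* Hs) j).val := by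
        rw [heq, vecMul_inl G Hs h1]
    _ ≤ ∑ γ : Fin kk' → ZMod 2, ∏ j : Fin n, x ^ (((e (β, γ)) ᵥ* Hs) j).val := by
        apply Finset.single_le_sum (f := fun γ : Fin kk' → ZMod 2 =>
          ∏ j : Fin n, x ^ (((e (β, γ)) ᵥ* Hs) j).val)
          (fun γ _ => Finset.prod_nonneg fun j _ => pow_nonneg hx _) (Finset.mem_univ _)

lemma bracket_repr (x y : ℝ) (s v : ZMod 2) :
    x ^ (s + v).val * y ^ v.val
      = (if s = 0 then (1 + x * y) / 2 else (x + y) / 2)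
        + (if s = 0 then (1 - x * y) / 2 else (x - y) / 2) * chi v := by
  rcases zmod2_cases s with h | h <;> rcases zmod2_cases v with h' | h' <;>
    simp [h, h', chi_zero, chi_one, ZMod.val_one,
      show ((1 : ZMod 2) + 1) = 0 by decide] <;> ring

lemma Yf_pair_mono (h1 : ∀ i, Hs (Sum.inl i) = G i) {x y : ℝ} (hy : 0 < y)
    (hxy : y ≤ x) (hx1 : x ≤ 1) :
    Yf Hs y * Yf G x ≤ Yf Hs x * Yf G y := by
  have key : ∀ (w z : ℝ), Yf Hs w * Yf G z
      = ∑ γ : (Fin rG ⊕ Fin kk') → ZMod 2, ∑ β : Fin rG → ZMod 2,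
          ∏ j : Fin n, (w ^ (((γ ᵥ* Hs) j) + ((β ᵥ* G) j)).val * z ^ ((β ᵥ* G) j).val) := by
    intro w z
    rw [Yf, Yf, Finset.sum_mul_sum, Finset.sum_comm]
    have step : ∀ β : Fin rG → ZMod 2,
        (∑ α : (Fin rG ⊕ Fin kk') → ZMod 2,
          (∏ j : Fin n, w ^ ((α ᵥ* Hs) j).val) * ∏ j : Fin n, z ^ ((β ᵥ* G) j).val)
        = ∑ γ : (Fin rG ⊕ Fin kk') → ZMod 2,
            ∏ j : Fin n, (w ^ (((γ ᵥ* Hs) j) + ((β ᵥ* G) j)).val * z ^ ((β ᵥ* G) j).val) := by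
      intro β
      rw [← Equiv.sum_comp (Equiv.addRight (Sum.elim β 0))
        (fun α : (Fin rG ⊕ Fin kk') → ZMod 2 =>
          (∏ j : Fin n, w ^ ((α ᵥ* Hs) j).val) * ∏ j : Fin n, z ^ ((β ᵥ* G) j).val)]
      apply Finset.sum_congr rfl
      intro γ _
      simp only [Equiv.coe_addRight]
      rw [Matrix.add_vecMul, vecMul_inl G Hs h1, ← Finset.prod_mul_distrib]
      apply Finset.prod_congr rfl
      intro j _
      rfl
    calc ∑ β : Fin rG → ZMod 2, ∑ α : (Fin rG ⊕ Fin kk') → ZMod 2,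
          (∏ j : Fin n, w ^ ((α ᵥ* Hs) j).val) * ∏ j : Fin n, z ^ ((β ᵥ* G) j).val
        = ∑ β : Fin rG → ZMod 2, ∑ γ : (Fin rG ⊕ Fin kk') → ZMod 2,
            ∏ j : Fin n, (w ^ (((γ ᵥ* Hs) j) + ((β ᵥ* G) j)).val * z ^ ((β ᵥ* G) j).val) :=
          Finset.sum_congr rfl fun β _ => step β
      _ = _ := Finset.sum_comm
  rw [key y x, key x y]
  apply Finset.sum_le_sum
  intro γ _
  set s := γ ᵥ* Hs with hs
  have hrw : ∀ (w z : ℝ) (β : Fin rG → ZMod 2),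
      ∏ j : Fin n, (w ^ ((s j) + ((β ᵥ* G) j)).val * z ^ ((β ᵥ* G) j).val)
        = ∏ j : Fin n, ((if s j = 0 then (1 + w * z) / 2 else (w + z) / 2)
            + (if s j = 0 then (1 - w * z) / 2 else (w - z) / 2) * chi ((β ᵥ* G) j)) := by
    intro w z β
    exact Finset.prod_congr rfl fun j _ => bracket_repr w z (s j) _
  rw [Finset.sum_congr rfl fun β _ => hrw y x β,
      Finset.sum_congr rfl fun β _ => hrw x y β]
  have hx0 : (0:ℝ) < x := lt_of_lt_of_le hy hxy
  have hy1 : y ≤ 1 := le_trans hxy hx1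
  apply cmpY G
  · intro j
    by_cases h : s j = 0 <;> simp only [h, if_true, if_false]
    · rw [abs_of_nonneg (by nlinarith)]; nlinarith
    · rw [abs_of_nonneg (by nlinarith)]; nlinarith
  · intro j
    by_cases h : s j = 0 <;> simp only [h, if_true, if_false]
    · rw [abs_of_nonneg (by nlinarith)]; nlinarith
    · rw [abs_of_nonpos (by nlinarith)]; nlinarith

end Pair


lemma Zf_zero_eq (M : Matrix ρ (Fin n) (ZMod 2)) (K : ℝ) :
    Zf M 0 K = Real.exp K ^ n * Yf M (Real.exp (-(2 * K))) := by
  rw [Zf, Yf, Finset.mul_sum]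
  apply Finset.sum_congr rfl
  intro α _
  have h1 : (K * ∑ b : Fin n, (-1 : ℝ) ^ (((0 : Fin n → ZMod 2) b).val + ((α ᵥ* M) b).val))
      = ∑ b : Fin n, K * (-1 : ℝ) ^ ((α ᵥ* M) b).val := by
    rw [Finset.mul_sum]
    apply Finset.sum_congr rfl
    intro b _
    simp
  rw [h1, Real.exp_sum]
  rw [show Real.exp K ^ n = ∏ _j : Fin n, Real.exp K by
    rw [Finset.prod_const, Finset.card_univ, Fintype.card_fin]]
  rw [← Finset.prod_mul_distrib]
  apply Finset.prod_congr rfl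
  intro b _
  rcases zmod2_cases ((α ᵥ* M) b) with h | h <;> rw [h]
  · simp
  · rw [ZMod.val_one, pow_one, pow_one, ← Real.exp_add]
    congr 1
    ring

lemma log_Zf_zero (M : Matrix ρ (Fin n) (ZMod 2)) (K : ℝ) :
    Real.log (Zf M 0 K) = n * K + Real.log (Yf M (Real.exp (-(2 * K)))) := by
  rw [Zf_zero_eq, Real.log_mul (by positivity) (ne_of_gt (Yf_pos M (Real.exp_pos _))),
    Real.log_pow, Real.log_exp]

lemma one_sub_tanh_div (a : ℝ) :
    (1 - Real.tanh a) / (1 + Real.tanh a) = Real.exp (-(2 * a)) := by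
  rw [Real.tanh_eq_sinh_div_cosh]
  have hc : 0 < Real.cosh a := Real.cosh_pos a
  have hcs : Real.cosh a + Real.sinh a = Real.exp a := Real.cosh_add_sinh a
  have hcs2 : Real.cosh a - Real.sinh a = Real.exp (-a) := Real.cosh_sub_sinh a
  have hne : Real.cosh a + Real.sinh a ≠ 0 := by rw [hcs]; positivity
  have key : (1 - Real.sinh a / Real.cosh a) / (1 + Real.sinh a / Real.cosh a)
      = (Real.cosh a - Real.sinh a) / (Real.cosh a + Real.sinh a) := by
    rw [show (1 - Real.sinh a / Real.cosh a) = (Real.cosh a - Real.sinh a) / Real.cosh a by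
          field_simp,
        show (1 + Real.sinh a / Real.cosh a) = (Real.cosh a + Real.sinh a) / Real.cosh a by
          field_simp]
    field_simp
  rw [key, hcs, hcs2, ← Real.exp_sub]
  congr 1
  ring

/-- Theorem 2 (homological form): if the homological free-energy differences per bond
vanish at `K₁` for `(G,H)` and at `K₂` for `(H,G)`, then `K₁ − K₂* ≥ R ln 2`. -/
theorem stmt16 (rG rH kk nn : ℕ → ℕ)
    (G : ∀ t, Matrix (Fin (rG t)) (Fin (nn t)) (ZMod 2))
    (H : ∀ t, Matrix (Fin (rH t)) (Fin (nn t)) (ZMod 2))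
    (hGH : ∀ t, G t * (H t)ᵀ = 0)
    (hk : ∀ t, kk t = nn t - (G t).rank - (H t).rank)
    (Hs : ∀ t, Matrix (Fin (rG t) ⊕ Fin (kk t)) (Fin (nn t)) (ZMod 2))
    (hHs : ∀ t, IsAdaptedDual (G t) (H t) (Hs t))
    (Gs : ∀ t, Matrix (Fin (rH t) ⊕ Fin (kk t)) (Fin (nn t)) (ZMod 2))
    (hGs : ∀ t, IsAdaptedDual (H t) (G t) (Gs t))
    (hn : Tendsto nn atTop atTop)
    (R : ℝ) (hR : 0 < R)
    (hrate : Tendsto (fun t => (kk t : ℝ) / (nn t : ℝ)) atTop (nhds R))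
    (K₁ K₂ : ℝ) (hK₁ : 0 < K₁) (hK₂ : 0 < K₂)
    (h₁ : Tendsto (fun t => deltaF (G t) (Hs t) 0 K₁ / (nn t : ℝ)) atTop (nhds 0))
    (h₂ : Tendsto (fun t => deltaF (H t) (Gs t) 0 K₂ / (nn t : ℝ)) atTop (nhds 0))
    (K₂s : ℝ) (hK₂s : 0 < K₂s) (hdual : Real.tanh K₂s = Real.exp (-(2 * K₂))) :
    K₁ - K₂s ≥ R * Real.log 2 := by
  classical
  have hlog2 : (0:ℝ) < Real.log 2 := Real.log_pos one_lt_two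
  set x₁ := Real.exp (-(2 * K₁)) with hx₁def
  set x₂ := Real.exp (-(2 * K₂)) with hx₂def
  set z := Real.exp (-(2 * K₂s)) with hzdef
  have hx₁0 : 0 < x₁ := Real.exp_pos _
  have hz0 : 0 < z := Real.exp_pos _
  have hx₂0 : 0 < x₂ := Real.exp_pos _
  have hx₁1 : x₁ < 1 := Real.exp_lt_one_iff.mpr (by linarith)
  have hx₂1 : x₂ < 1 := Real.exp_lt_one_iff.mpr (by linarith)
  have hz1 : z < 1 := Real.exp_lt_one_iff.mpr (by linarith)
  have hdualpt : (1 - x₂) / (1 + x₂) = z := by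
    rw [← hdual, one_sub_tanh_div]
  have hd1 : ∀ t, deltaF (G t) (Hs t) 0 K₁
      = Real.log (Yf (Hs t) x₁) - Real.log (Yf (G t) x₁) := by
    intro t
    rw [deltaF, log_Zf_zero, log_Zf_zero, ← hx₁def]
    ring
  have hd2 : ∀ t, deltaF (H t) (Gs t) 0 K₂
      = (kk t : ℝ) * Real.log 2 - (Real.log (Yf (Hs t) z) - Real.log (Yf (G t) z)) := by
    intro t
    rw [deltaF, log_Zf_zero, log_Zf_zero, ← hx₂def]
    have hKI := keyIdentity (G t) (H t) (Hs t) (Gs t) (hGH t) (hk t) (hHs t) (hGs t)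
      hx₂0 hx₂1
    rw [hdualpt] at hKI
    linarith
  have hφx₁ : Tendsto (fun t =>
      (Real.log (Yf (Hs t) x₁) - Real.log (Yf (G t) x₁)) / nn t) atTop (nhds 0) :=
    h₁.congr fun t => by rw [hd1 t]
  have hφz : Tendsto (fun t =>
      (Real.log (Yf (Hs t) z) - Real.log (Yf (G t) z)) / nn t) atTop
      (nhds (R * Real.log 2)) := by
    have base : Tendsto (fun t => (kk t : ℝ) / (nn t : ℝ) * Real.log 2
        - deltaF (H t) (Gs t) 0 K₂ / nn t) atTop (nhds (R * Real.log 2 - 0)) :=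
      (hrate.mul_const _).sub h₂
    rw [sub_zero] at base
    apply base.congr
    intro t
    rw [hd2 t]
    ring
  have hdiff : Tendsto (fun t =>
      (Real.log (Yf (Hs t) z) - Real.log (Yf (G t) z)) / nn t
      - (Real.log (Yf (Hs t) x₁) - Real.log (Yf (G t) x₁)) / nn t) atTop
      (nhds (R * Real.log 2)) := by
    have := hφz.sub hφx₁
    rwa [sub_zero] at this
  rcases le_or_gt x₁ z with hcase | hcase
  · -- ordered case : the Lipschitz bound gives the result
    have bound : ∀ t, 1 ≤ nn t →
        (Real.log (Yf (Hs t) z) - Real.log (Yf (G t) z)) / nn t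
          - (Real.log (Yf (Hs t) x₁) - Real.log (Yf (G t) x₁)) / nn t ≤ K₁ - K₂s := by
      intro t ht
      have hnpos : (0:ℝ) < nn t := by exact_mod_cast Nat.lt_of_lt_of_le Nat.zero_lt_one ht
      have L1 : Real.log (Yf (Hs t) z) - Real.log (Yf (Hs t) x₁)
          ≤ (nn t : ℝ) / 2 * (Real.log z - Real.log x₁) := by
        have hlip := Yf_lip (Hs t) hx₁0 hcase hz1.le
        have hl := Real.log_le_log (mul_pos (pow_pos (Real.sqrt_pos.mpr hx₁0) _) (Yf_pos _ hz0)) hlip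
        rw [Real.log_mul (by positivity) (ne_of_gt (Yf_pos _ hz0)),
            Real.log_mul (by positivity) (ne_of_gt (Yf_pos _ hx₁0)),
            Real.log_pow, Real.log_pow, Real.log_sqrt hx₁0.le, Real.log_sqrt hz0.le] at hl
        linarith
      have L2 : 0 ≤ Real.log (Yf (G t) z) - Real.log (Yf (G t) x₁) := by
        have hm := Yf_mono (G t) hx₁0.le hcase
        have := Real.log_le_log (Yf_pos _ hx₁0) hm
        linarith
      have L3 : Real.log z - Real.log x₁ = 2 * (K₁ - K₂s) := by
        rw [hzdef, hx₁def, Real.log_exp, Real.log_exp]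
        ring
      have step : (Real.log (Yf (Hs t) z) - Real.log (Yf (G t) z))
          - (Real.log (Yf (Hs t) x₁) - Real.log (Yf (G t) x₁))
          ≤ (nn t : ℝ) * (K₁ - K₂s) := by
        rw [L3] at L1
        linarith
      rw [div_sub_div_same]
      calc ((Real.log (Yf (Hs t) z) - Real.log (Yf (G t) z))
            - (Real.log (Yf (Hs t) x₁) - Real.log (Yf (G t) x₁))) / nn t
          ≤ ((nn t : ℝ) * (K₁ - K₂s)) / nn t := (div_le_div_iff_of_pos_right hnpos).mpr step
        _ = K₁ - K₂s := by field_simp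
    exact le_of_tendsto hdiff ((hn.eventually_ge_atTop 1).mono bound)
  · -- otherwise monotonicity forces R log 2 ≤ 0, contradiction
    exfalso
    have bound : ∀ t,
        (Real.log (Yf (Hs t) z) - Real.log (Yf (G t) z)) / nn t
          - (Real.log (Yf (Hs t) x₁) - Real.log (Yf (G t) x₁)) / nn t ≤ 0 := by
      intro t
      have hpm := Yf_pair_mono (G t) (Hs t) (hHs t).1 hz0 hcase.le hx₁1.le
      have hl := Real.log_le_log (mul_pos (Yf_pos _ hz0) (Yf_pos _ hx₁0)) hpm
      rw [Real.log_mul (ne_of_gt (Yf_pos _ hz0)) (ne_of_gt (Yf_pos _ hx₁0)),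
          Real.log_mul (ne_of_gt (Yf_pos _ hx₁0)) (ne_of_gt (Yf_pos _ hz0))] at hl
      rw [div_sub_div_same]
      apply div_nonpos_of_nonpos_of_nonneg _ (Nat.cast_nonneg _)
      linarith
    have hle := le_of_tendsto hdiff (Filter.Eventually.of_forall bound)
    nlinarith
end

section
/- Let H₁ be an r₁×n₁ matrix over F₂ and H₂ an r₂×n₂ matrix over F₂. Define the hypergraph-product generator matrices G_x = [ I_{r₂} ⊗ H₁ | H₂ ⊗ I_{r₁} ] (size r₁r₂ × (r₂n₁ + r₁n₂)) and G_z = [ H₂ᵀ ⊗ I_{n₁} | I_{n₂} ⊗ H₁ᵀ ] (size n₁n₂ × (r₂n₁ + r₁n₂)), where ⊗ denotes the Kronecker product and the blocks are concatenated horizontally. Then G_x · G_zᵀ = 0 over F₂. -/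
open Matrix Kronecker

/-! Both blocks of `G_x G_zᵀ` equal `H₂ ⊗ H₁` by the mixed-product rule
`(A ⊗ B)(C ⊗ D) = AC ⊗ BD`, so the product is `2 (H₂ ⊗ H₁)`, which vanishes in characteristic 2. -/

section

variable {R ι₁ κ₁ ι₂ κ₂ : Type*} [CommSemiring R]
  [Fintype ι₁] [Fintype κ₁] [Fintype ι₂] [Fintype κ₂]
  [DecidableEq ι₁] [DecidableEq κ₁] [DecidableEq ι₂] [DecidableEq κ₂]

theorem hypergraphProduct_mul_transpose (H₁ : Matrix ι₁ κ₁ R) (H₂ : Matrix ι₂ κ₂ R) :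
    fromCols ((1 : Matrix ι₂ ι₂ R) ⊗ₖ H₁) (H₂ ⊗ₖ (1 : Matrix ι₁ ι₁ R)) *
        (fromCols (H₂ᵀ ⊗ₖ (1 : Matrix κ₁ κ₁ R)) ((1 : Matrix κ₂ κ₂ R) ⊗ₖ H₁ᵀ))ᵀ =
      H₂ ⊗ₖ H₁ + H₂ ⊗ₖ H₁ := by
  rw [transpose_fromCols, fromCols_mul_fromRows, ← kroneckerMap_transpose,
    ← kroneckerMap_transpose, transpose_transpose, transpose_one, transpose_one,
    transpose_transpose, ← mul_kronecker_mul, ← mul_kronecker_mul,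
    Matrix.one_mul, Matrix.mul_one, Matrix.one_mul, Matrix.mul_one]

theorem hypergraphProduct_mul_transpose_eq_zero [CharP R 2]
    (H₁ : Matrix ι₁ κ₁ R) (H₂ : Matrix ι₂ κ₂ R) :
    fromCols ((1 : Matrix ι₂ ι₂ R) ⊗ₖ H₁) (H₂ ⊗ₖ (1 : Matrix ι₁ ι₁ R)) *
        (fromCols (H₂ᵀ ⊗ₖ (1 : Matrix κ₁ κ₁ R)) ((1 : Matrix κ₂ κ₂ R) ⊗ₖ H₁ᵀ))ᵀ = 0 := by
  rw [hypergraphProduct_mul_transpose, ← two_nsmul, ← Nat.cast_smul_eq_nsmul R,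
    CharP.cast_eq_zero, zero_smul]

end

/-- Hypergraph-product construction: `G_x · G_zᵀ = 0` over `F₂`. -/
theorem stmt18 {r₁ n₁ r₂ n₂ : ℕ}
    (H₁ : Matrix (Fin r₁) (Fin n₁) (ZMod 2))
    (H₂ : Matrix (Fin r₂) (Fin n₂) (ZMod 2)) :
    (Matrix.fromCols
        ((1 : Matrix (Fin r₂) (Fin r₂) (ZMod 2)) ⊗ₖ H₁)
        (H₂ ⊗ₖ (1 : Matrix (Fin r₁) (Fin r₁) (ZMod 2)))) *
      (Matrix.fromCols
        (H₂ᵀ ⊗ₖ (1 : Matrix (Fin n₁) (Fin n₁) (ZMod 2)))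
        ((1 : Matrix (Fin n₂) (Fin n₂) (ZMod 2)) ⊗ₖ H₁ᵀ))ᵀ = 0 :=
  hypergraphProduct_mul_transpose_eq_zero H₁ H₂
end
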